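/- arXiv:0912.0336 — 2 statements merged into one kernel-verified Lean document; each statement's English description precedes it below -/
import Mathlib

section
/- For every real m×n matrix A and vectors x ∈ ℝⁿ, y ∈ ℝᵐ, one has |⟨Ax, y⟩| ≤ 4·‖x‖_∞·‖y‖_∞·‖A‖_□·m·n. -/
/-!
If every partial sum `∑ i ∈ S, v i` has absolute value at most `M`, then splitting the indices by
the sign of `v i` gives `∑ i, |v i| ≤ 2 M`, hence `|∑ i, w i * v i| ≤ 2 ‖w‖_∞ M`. For each column
set `Y`, the row sums `∑ j ∈ Y, A i j` have all partial sums bounded by `‖A‖_□ m n`, so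
`|∑ j ∈ Y, (Aᵀ y) j| ≤ 2 ‖y‖_∞ ‖A‖_□ m n`; applying the same fact to `x` against `Aᵀ y` gives
the factor `4`.
-/

open Matrix Finset

/-- The cut-norm of a real `m × n` matrix:
`max_{X ⊆ [m], Y ⊆ [n]} |Σ(A[X,Y])| / (mn)`. -/
noncomputable def cutNorm {m n : ℕ} (A : Matrix (Fin m) (Fin n) ℝ) : ℝ :=
  Finset.univ.sup' Finset.univ_nonempty
    (fun p : Finset (Fin m) × Finset (Fin n) =>
      |∑ i ∈ p.1, ∑ j ∈ p.2, A i j| / (m * n))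

section

variable {ι : Type*} [Fintype ι]

theorem sum_abs_le_two_mul_of_forall_abs_sum_le {v : ι → ℝ} {M : ℝ}
    (hM : ∀ s : Finset ι, |∑ i ∈ s, v i| ≤ M) : ∑ i, |v i| ≤ 2 * M := by
  classical
  set P := univ.filter fun i => 0 ≤ v i
  have hP : ∑ i ∈ P, |v i| = ∑ i ∈ P, v i :=
    sum_congr rfl fun i hi => abs_of_nonneg (mem_filter.mp hi).2
  have hPc : ∑ i ∈ Pᶜ, |v i| = -∑ i ∈ Pᶜ, v i := by
    rw [← sum_neg_distrib]
    exact sum_congr rfl fun i hi => abs_of_neg (by simpa [P] using hi)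
  rw [← sum_add_sum_compl P, hP, hPc]
  linarith [le_abs_self (∑ i ∈ P, v i), neg_abs_le (∑ i ∈ Pᶜ, v i), hM P, hM Pᶜ]

theorem abs_sum_mul_le_two_mul_norm_mul (w : ι → ℝ) {v : ι → ℝ} {M : ℝ}
    (hM : ∀ s : Finset ι, |∑ i ∈ s, v i| ≤ M) : |∑ i, w i * v i| ≤ 2 * ‖w‖ * M :=
  calc |∑ i, w i * v i| ≤ ∑ i, ‖w‖ * |v i| :=
        (abs_sum_le_sum_abs _ _).trans <| sum_le_sum fun i _ => by
          rw [abs_mul, ← Real.norm_eq_abs (w i)]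
          exact mul_le_mul_of_nonneg_right (norm_le_pi_norm w i) (abs_nonneg _)
    _ ≤ ‖w‖ * (2 * M) := by
        rw [← mul_sum]
        exact mul_le_mul_of_nonneg_left (sum_abs_le_two_mul_of_forall_abs_sum_le hM) (norm_nonneg w)
    _ = 2 * ‖w‖ * M := by ring

end

theorem abs_sum_sum_le_cutNorm_mul {m n : ℕ} (A : Matrix (Fin m) (Fin n) ℝ)
    (X : Finset (Fin m)) (Y : Finset (Fin n)) :
    |∑ i ∈ X, ∑ j ∈ Y, A i j| ≤ cutNorm A * m * n := by
  rcases Nat.eq_zero_or_pos m with rfl | hm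
  · simp [eq_empty_of_isEmpty X]
  rcases Nat.eq_zero_or_pos n with rfl | hn
  · simp [eq_empty_of_isEmpty Y]
  rw [mul_assoc, ← div_le_iff₀ (mul_pos (Nat.cast_pos.mpr hm) (Nat.cast_pos.mpr hn))]
  exact le_sup' (fun p : Finset (Fin m) × Finset (Fin n) =>
    |∑ i ∈ p.1, ∑ j ∈ p.2, A i j| / (m * n)) (mem_univ (X, Y))

/-- For a real `m × n` matrix `A` and real vectors `x`, `y`,
`|⟨Ax, y⟩| ≤ 4 ‖x‖_∞ ‖y‖_∞ ‖A‖_□ m n`.  (The norm on `Fin k → ℝ` is the sup-norm.) -/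
theorem abs_inner_mulVec_le_four_cutNorm {m n : ℕ} (A : Matrix (Fin m) (Fin n) ℝ)
    (x : Fin n → ℝ) (y : Fin m → ℝ) :
    |∑ i, A.mulVec x i * y i| ≤ 4 * ‖x‖ * ‖y‖ * cutNorm A * m * n := by
  have hcols (Y : Finset (Fin n)) :
      |∑ j ∈ Y, ∑ i, y i * A i j| ≤ 2 * ‖y‖ * (cutNorm A * m * n) := by
    rw [sum_comm]
    simp only [← mul_sum]
    exact abs_sum_mul_le_two_mul_norm_mul y fun X => abs_sum_sum_le_cutNorm_mul A X Y
  calc |∑ i, A.mulVec x i * y i| = |∑ j, x j * ∑ i, y i * A i j| := by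
        simp only [mulVec, dotProduct, sum_mul, mul_sum]
        rw [sum_comm]; congr! 3; ring
    _ ≤ 2 * ‖x‖ * (2 * ‖y‖ * (cutNorm A * m * n)) := abs_sum_mul_le_two_mul_norm_mul x hcols
    _ = 4 * ‖x‖ * ‖y‖ * cutNorm A * m * n := by ring
end

section
/- For every real m×n matrix A, the largest singular value satisfies σ₁(A) ≤ 2·√(|A|_∞·‖A‖_□·m·n), where |A|_∞ = max_{i,j}|a_{ij}|. -/
open Matrix Finset

/-- `|A|_∞ = max_{i,j} |a_{ij}|`. -/
noncomputable def supAbs {m n : ℕ} (A : Matrix (Fin m) (Fin n) ℝ) : ℝ :=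
  ⨆ i, ⨆ j, |A i j|

/-- `f` rearranged in decreasing order. -/
noncomputable def sortDesc {N : ℕ} (f : Fin N → ℝ) : Fin N → ℝ :=
  fun i => f (Tuple.sort f i.rev)

/-- The singular values `σ₁(A) ≥ σ₂(A) ≥ ⋯` of `A` (0-indexed):
`σ_{i+1}(A) = singVal A i` is the square root of the `(i+1)`-st largest
eigenvalue of the Hermitian matrix `Aᴴ A`. -/
noncomputable def singVal {m n : ℕ} (A : Matrix (Fin m) (Fin n) ℝ) (i : ℕ) : ℝ :=
  if h : i < n then
    Real.sqrt (sortDesc (Matrix.isHermitian_conjTranspose_mul_self A).eigenvalues ⟨i, h⟩)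
  else 0

/-!
`σ₁(A)²` is the largest eigenvalue of the Gram matrix `AᵀA`, which by Gershgorin is at
most the largest absolute row sum `∑ₖ |∑ᵢ aᵢⱼ aᵢₖ|` of `AᵀA`. A real vector `w` whose partial
sums `∑_{i ∈ S} wᵢ` are all bounded by `c` in absolute value has `‖w‖₁ ≤ 2c` (split by sign).
Applied to the column sums `∑_{k ∈ K} aᵢₖ`, this bounds `∑ᵢ |∑_{k ∈ K} aᵢₖ|` by
`2 ‖A‖_□ m n`; hence every partial row sum of `AᵀA` is at most `2 |A|_∞ ‖A‖_□ m n`, and applying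
the sign-splitting bound once more bounds its absolute row sums by `4 |A|_∞ ‖A‖_□ m n`.
-/

theorem Finset.sum_abs_le_two_mul_of_forall_abs_sum_le {ι : Type*} [Fintype ι] (w : ι → ℝ)
    {c : ℝ} (h : ∀ s : Finset ι, |∑ i ∈ s, w i| ≤ c) : ∑ i, |w i| ≤ 2 * c := by
  classical
  have hpos : ∑ i with 0 ≤ w i, |w i| = ∑ i with 0 ≤ w i, w i :=
    sum_congr rfl fun i hi => abs_of_nonneg (mem_filter.1 hi).2
  have hneg : ∑ i with ¬0 ≤ w i, |w i| = -∑ i with ¬0 ≤ w i, w i := by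
    rw [← sum_neg_distrib]
    exact sum_congr rfl fun i hi => abs_of_neg (not_le.1 (mem_filter.1 hi).2)
  rw [← sum_filter_add_sum_filter_not univ (fun i => 0 ≤ w i), hpos, hneg, two_mul]
  exact add_le_add ((le_abs_self _).trans (h _)) ((neg_le_abs _).trans (h _))

theorem Matrix.norm_le_of_hasEigenvalue {K n : Type*} [NormedField K] [Fintype n]
    [DecidableEq n] {A : Matrix n n K} {μ : K} (hμ : Module.End.HasEigenvalue (toLin' A) μ)
    {c : ℝ} (hc : ∀ i, ∑ j, ‖A i j‖ ≤ c) : ‖μ‖ ≤ c := by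
  obtain ⟨k, hk⟩ := eigenvalue_mem_ball hμ
  rw [Metric.mem_closedBall, dist_eq_norm] at hk
  calc ‖μ‖ ≤ ‖A k k‖ + ‖μ - A k k‖ := norm_le_norm_add_norm_sub' μ (A k k)
    _ ≤ ‖A k k‖ + ∑ j ∈ univ.erase k, ‖A k j‖ := by gcongr
    _ = ∑ j, ‖A k j‖ := add_sum_erase _ (fun j => ‖A k j‖) (mem_univ k)
    _ ≤ c := hc k

theorem Matrix.IsHermitian.eigenvalues_le_of_sum_abs_le {n : Type*} [Fintype n] [DecidableEq n]
    {H : Matrix n n ℝ} (hH : H.IsHermitian) {c : ℝ} (hc : ∀ i, ∑ j, |H i j| ≤ c) (k : n) :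
    hH.eigenvalues k ≤ c := by
  have hμ : Module.End.HasEigenvalue (toLin' H) (hH.eigenvalues k) := by
    rw [Module.End.hasEigenvalue_iff_mem_spectrum, spectrum_toLin']
    exact hH.eigenvalues_mem_spectrum_real k
  exact (le_abs_self _).trans (norm_le_of_hasEigenvalue hμ hc)

section CutNorm

variable {m n : ℕ} (A : Matrix (Fin m) (Fin n) ℝ)

theorem abs_le_supAbs (i : Fin m) (j : Fin n) : |A i j| ≤ supAbs A :=
  (le_ciSup (Set.finite_range _).bddAbove j).trans
    (le_ciSup (f := fun i => ⨆ j, |A i j|) (Set.finite_range _).bddAbove i)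

theorem supAbs_nonneg : 0 ≤ supAbs A :=
  Real.iSup_nonneg fun _ => Real.iSup_nonneg fun _ => abs_nonneg _

theorem abs_sum_sum_le_cutNorm (X : Finset (Fin m)) (Y : Finset (Fin n)) :
    |∑ i ∈ X, ∑ j ∈ Y, A i j| ≤ cutNorm A * m * n := by
  rcases eq_or_ne m 0 with rfl | hm
  · simp [Finset.eq_empty_of_isEmpty X]
  rcases eq_or_ne n 0 with rfl | hn
  · simp [Finset.eq_empty_of_isEmpty Y]
  have hle := le_sup' (fun p : Finset (Fin m) × Finset (Fin n) =>
    |∑ i ∈ p.1, ∑ j ∈ p.2, A i j| / (m * n)) (mem_univ (X, Y))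
  rwa [div_le_iff₀ (by positivity), ← mul_assoc] at hle

theorem sum_abs_sum_le_cutNorm (K : Finset (Fin n)) :
    ∑ i, |∑ k ∈ K, A i k| ≤ 2 * (cutNorm A * m * n) :=
  sum_abs_le_two_mul_of_forall_abs_sum_le _ fun X => abs_sum_sum_le_cutNorm A X K

theorem sum_abs_conjTranspose_mul_self_le (j : Fin n) :
    ∑ k, |(Aᴴ * A) j k| ≤ 4 * (supAbs A * cutNorm A * m * n) := by
  have hentry : ∀ k, (Aᴴ * A) j k = ∑ i, A i j * A i k := fun k => by
    simp [mul_apply]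
  have hpartial : ∀ K : Finset (Fin n), |∑ k ∈ K, (Aᴴ * A) j k|
      ≤ 2 * (supAbs A * cutNorm A * m * n) := fun K =>
    calc |∑ k ∈ K, (Aᴴ * A) j k| = |∑ i, A i j * ∑ k ∈ K, A i k| := by
          simp only [hentry, mul_sum]; rw [sum_comm]
      _ ≤ ∑ i, |A i j| * |∑ k ∈ K, A i k| := by
          simpa only [abs_mul] using abs_sum_le_sum_abs (fun i => A i j * ∑ k ∈ K, A i k) univ
      _ ≤ ∑ i, supAbs A * |∑ k ∈ K, A i k| := by
          gcongr with i; exact abs_le_supAbs A i j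
      _ ≤ supAbs A * (2 * (cutNorm A * m * n)) := by
          rw [← mul_sum]
          exact mul_le_mul_of_nonneg_left (sum_abs_sum_le_cutNorm A K) (supAbs_nonneg A)
      _ = 2 * (supAbs A * cutNorm A * m * n) := by ring
  linarith [sum_abs_le_two_mul_of_forall_abs_sum_le _ hpartial]

theorem singVal_le_sqrt {c : ℝ}
    (hc : ∀ k, (isHermitian_conjTranspose_mul_self A).eigenvalues k ≤ c) (i : ℕ) :
    singVal A i ≤ √c := by
  unfold singVal sortDesc
  split_ifs
  · exact Real.sqrt_le_sqrt (hc _)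
  · exact Real.sqrt_nonneg c

end CutNorm

/-- For every real `m × n` matrix, `σ₁(A) ≤ 2 √(|A|_∞ ‖A‖_□ m n)`. -/
theorem singVal_one_le_cutNorm_real {m n : ℕ} (A : Matrix (Fin m) (Fin n) ℝ) :
    singVal A 0 ≤ 2 * Real.sqrt (supAbs A * cutNorm A * m * n) := by
  have hgram := (isHermitian_conjTranspose_mul_self A).eigenvalues_le_of_sum_abs_le
    (sum_abs_conjTranspose_mul_self_le A)
  calc singVal A 0 ≤ √(4 * (supAbs A * cutNorm A * m * n)) := singVal_le_sqrt A hgram 0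
    _ = 2 * √(supAbs A * cutNorm A * m * n) := by
      rw [Real.sqrt_mul (by norm_num), show (4 : ℝ) = 2 ^ 2 by norm_num,
        Real.sqrt_sq (by norm_num)]
end
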